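/- arXiv:1904.09109 — 2 statements merged into one kernel-verified Lean document; each statement's English description precedes it below -/
import Mathlib

section
/- (Theorem 1) Let D be a probability distribution on ℝ^d × {1,…,c} that is k-separable with δ-margin, witnessed by a unit vector a ∈ ℝ^d, boundaries b_1 < ⋯ < b_{k+1}, and labels y_1, …, y_k ∈ {1,…,c}. Let f : {1,…,c} → ℝ^m be injective and let ε > 0. Define W ∈ ℝ^{k×m} with first row f(y_1)ᵀ and i-th row (f(y_i) - f(y_{i-1}))ᵀ for 2 ≤ i ≤ k, with columns w_1, …, w_m ∈ ℝ^k; assume max_{1≤j≤m} ‖w_j‖₂ > 0 and set c_s = (1/δ)·log(√k · max_{1≤j≤m} ‖w_j‖₂ / ε). Then the 2-layer sigmoid network g : ℝ^d → ℝ^m given by g_j(x) = Σ_{l=1}^{k} W_{l,j} · ρ(c_s(aᵀx - b_l)) satisfies P_{(x,y)∼D}( max_{1≤j≤m} |g_j(x) - f_j(y)| > ε ) = 0, i.e., for D-almost every (x,y), max_j |g_j(x) - f_j(y)| ≤ ε. -/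
open RealInnerProductSpace MeasureTheory

/-- The sigmoid function `ρ(t) = 1 / (1 + e^{-t})`. -/
noncomputable def sigmoid (t : ℝ) : ℝ := 1 / (1 + Real.exp (-t))

/-! On the `i`-th strip every unit `l` has pre-activation `c_s (aᵀx - b_l)` of absolute value at
least `c_s δ`, positive iff `l ≤ i`, so it is within `e^{-c_s δ} = ε / (√k M)` of the step `[l ≤ i]`.
With the units replaced by these steps, `g(x)` becomes the partial sum `∑_{l ≤ i} W_l` of the
telescoping rows, which is `f(y_i)`, and Cauchy–Schwarz bounds the error in column `j` by
`√k ‖w_j‖ e^{-c_s δ} ≤ ε`. Almost every sample lies in a strip and carries that strip's label. -/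

open Finset

lemma sigmoid_eq_real_sigmoid : sigmoid = Real.sigmoid := by
  ext t; rw [sigmoid, Real.sigmoid_def, one_div]

namespace Real

lemma sigmoid_le_exp (t : ℝ) : sigmoid t ≤ exp t := by
  rw [← neg_neg t, ← sigmoid_mul_rexp_neg, neg_neg]
  exact mul_le_of_le_one_left (exp_pos t).le (sigmoid_le_one _)

lemma sigmoid_mul_le_exp {c δ u : ℝ} (hδ : 0 ≤ δ) (hu : u ≤ -δ) :
    sigmoid (c * u) ≤ exp (-(c * δ)) := by
  rcases le_or_gt 0 c with hc | hc
  · calc sigmoid (c * u) ≤ exp (c * u) := sigmoid_le_exp _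
      _ ≤ exp (-(c * δ)) := exp_le_exp.mpr (by nlinarith)
  · calc sigmoid (c * u) ≤ 1 := sigmoid_le_one _
      _ ≤ exp (-(c * δ)) := one_le_exp (by nlinarith)

end Real

lemma abs_sigmoid_sub_step_le {k : ℕ} {b : Fin (k + 1) → ℝ} (hb : StrictMono b)
    {δ c t : ℝ} (hδ : 0 ≤ δ) {i : Fin k} (hlo : b i.castSucc + δ < t) (hhi : t < b i.succ - δ)
    (l : Fin k) :
    |Real.sigmoid (c * (t - b l.castSucc)) - if l ≤ i then 1 else 0| ≤ Real.exp (-(c * δ)) := by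
  split_ifs with hl
  · have hbl : b l.castSucc ≤ b i.castSucc := hb.monotone (Fin.castSucc_le_castSucc_iff.mpr hl)
    rw [abs_sub_comm, abs_of_nonneg (sub_nonneg.mpr (Real.sigmoid_le_one _)), ← Real.sigmoid_neg,
      ← mul_neg]
    exact Real.sigmoid_mul_le_exp hδ (by linarith)
  · have hbl : b i.succ ≤ b l.castSucc :=
      hb.monotone (Fin.succ_le_castSucc_iff.mpr (not_le.mp hl))
    rw [sub_zero, abs_of_nonneg (Real.sigmoid_nonneg _)]
    exact Real.sigmoid_mul_le_exp hδ (by linarith)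

lemma sum_abs_le_sqrt_card_mul_sqrt_sum_sq {ι : Type*} (s : Finset ι) (w : ι → ℝ) :
    ∑ i ∈ s, |w i| ≤ √(#s) * √(∑ i ∈ s, w i ^ 2) := by
  rw [← Real.sqrt_mul (Nat.cast_nonneg _)]
  apply Real.le_sqrt_of_sq_le
  simpa only [sq_abs] using sq_sum_le_card_mul_sum_sq (s := s) (f := fun i => |w i|)

lemma abs_sum_mul_le_sqrt_card_mul {ι : Type*} (s : Finset ι) (w u : ι → ℝ) {E : ℝ}
    (hE : 0 ≤ E) (hu : ∀ i ∈ s, |u i| ≤ E) :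
    |∑ i ∈ s, w i * u i| ≤ √(#s) * √(∑ i ∈ s, w i ^ 2) * E :=
  calc |∑ i ∈ s, w i * u i| ≤ ∑ i ∈ s, |w i| * |u i| := by
        simpa only [abs_mul] using abs_sum_le_sum_abs (fun i => w i * u i) s
    _ ≤ ∑ i ∈ s, |w i| * E := sum_le_sum fun i hi => by gcongr; exact hu i hi
    _ = (∑ i ∈ s, |w i|) * E := (sum_mul _ _ _).symm
    _ ≤ √(#s) * √(∑ i ∈ s, w i ^ 2) * E := by
        gcongr; exact sum_abs_le_sqrt_card_mul_sqrt_sum_sq s w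

lemma abs_sum_mul_sigmoid_sub_sum_Iic_le {k : ℕ} {b : Fin (k + 1) → ℝ} (hb : StrictMono b)
    {δ c t : ℝ} (hδ : 0 ≤ δ) {i : Fin k} (hlo : b i.castSucc + δ < t) (hhi : t < b i.succ - δ)
    (w : Fin k → ℝ) :
    |∑ l, w l * Real.sigmoid (c * (t - b l.castSucc)) - ∑ l ∈ Iic i, w l|
      ≤ √k * √(∑ l, w l ^ 2) * Real.exp (-(c * δ)) := by
  have hstep : ∑ l ∈ Iic i, w l = ∑ l, w l * if l ≤ i then 1 else 0 := by
    simp only [mul_ite, mul_one, mul_zero, ← sum_filter]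
    congr 1; ext; simp
  rw [hstep, ← sum_sub_distrib]
  simp_rw [← mul_sub]
  simpa only [card_univ, Fintype.card_fin] using abs_sum_mul_le_sqrt_card_mul univ w _
    (Real.exp_pos _).le fun l _ => abs_sigmoid_sub_step_le hb hδ hlo hhi l

lemma sum_Iic_eq_of_eq_sub {α : Type*} [AddCommGroup α] {k : ℕ} (hk : 0 < k) {W v : Fin k → α}
    (h0 : W ⟨0, hk⟩ = v ⟨0, hk⟩) (hsucc : ∀ i j : Fin k, (j : ℕ) = i + 1 → W j = v j - v i)
    (i : Fin k) : ∑ l ∈ Iic i, W l = v i := by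
  obtain ⟨n, hn⟩ := i
  induction n with
  | zero =>
    have : Iic (⟨0, hn⟩ : Fin k) = {⟨0, hk⟩} := by ext l; simp [Fin.ext_iff, Fin.le_def]
    rw [this, sum_singleton, h0]
  | succ n ih =>
    have : Iic (⟨n + 1, hn⟩ : Fin k) = insert ⟨n + 1, hn⟩ (Iic ⟨n, by omega⟩) := by
      ext l; simp only [mem_Iic, mem_insert, Fin.ext_iff, Fin.le_def]; omega
    rw [this, sum_insert (by simp [Fin.le_def]), ih, hsucc ⟨n, by omega⟩ _ rfl, sub_add_cancel]

lemma ae_exists_and_of_measure_and_eq {Ω ι : Type*} [MeasurableSpace Ω] [Countable ι]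
    {μ : Measure Ω} [IsProbabilityMeasure μ] {P Q : ι → Ω → Prop}
    (hP : ∀ i, MeasurableSet {x | P i x}) (hQ : ∀ i, MeasurableSet {x | Q i x})
    (hcond : ∀ i, μ {x | P i x ∧ Q i x} = μ {x | P i x}) (hcover : μ {x | ∃ i, P i x} = 1) :
    ∀ᵐ x ∂μ, ∃ i, P i x ∧ Q i x := by
  have hex : ∀ᵐ x ∂μ, ∃ i, P i x := by
    refine (mem_ae_iff_prob_eq_one ?_).mpr hcover
    rw [Set.ofPred_exists]; exact MeasurableSet.iUnion hP
  have himp : ∀ i, ∀ᵐ x ∂μ, P i x → Q i x := by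
    intro i
    have hdiff : μ ({x | P i x} \ {x | Q i x}) = 0 := by
      rw [← Set.sdiff_self_inter, measure_sdiff Set.inter_subset_left
        ((hP i).inter (hQ i)).nullMeasurableSet (measure_ne_top μ _)]
      exact tsub_eq_zero_of_le (hcond i).ge
    simp only [ae_iff, Classical.not_imp]
    exact hdiff
  filter_upwards [hex, ae_all_iff.mpr himp] with x ⟨i, hi⟩ himp
  exact ⟨i, hi, himp i hi⟩

theorem two_layer_network_perfect_fit_general {d c k m : ℕ} (hk : 0 < k) (hm : 0 < m)
    (μ : Measure (EuclideanSpace ℝ (Fin d) × Fin c)) [IsProbabilityMeasure μ]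
    (δ : ℝ) (hδ : 0 < δ)
    (a : EuclideanSpace ℝ (Fin d))
    (b : Fin (k + 1) → ℝ) (hb : StrictMono b)
    (y : Fin k → Fin c)
    (hcond : ∀ i : Fin k,
      μ {p | (b i.castSucc + δ < ⟪a, p.1⟫ ∧ ⟪a, p.1⟫ < b i.succ - δ) ∧ p.2 = y i}
        = μ {p | b i.castSucc + δ < ⟪a, p.1⟫ ∧ ⟪a, p.1⟫ < b i.succ - δ})
    (hcover :
      μ {p | ∃ i : Fin k, b i.castSucc + δ < ⟪a, p.1⟫ ∧ ⟪a, p.1⟫ < b i.succ - δ} = 1)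
    (f : Fin c → Fin m → ℝ)
    (ε : ℝ) (hε : 0 < ε)
    (W : Matrix (Fin k) (Fin m) ℝ)
    (hW0 : W ⟨0, hk⟩ = f (y ⟨0, hk⟩))
    (hWs : ∀ i j : Fin k, (j : ℕ) = (i : ℕ) + 1 → W j = f (y j) - f (y i))
    (M : ℝ)
    (hM : M = Finset.univ.sup' (Finset.univ_nonempty_iff.mpr ⟨⟨0, hm⟩⟩)
      (fun j : Fin m => Real.sqrt (∑ l : Fin k, (W l j) ^ 2)))
    (hMpos : 0 < M)
    (cs : ℝ) (hcs : cs = (1 / δ) * Real.log (Real.sqrt k * M / ε))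
    (g : EuclideanSpace ℝ (Fin d) → Fin m → ℝ)
    (hg : ∀ x j, g x j = ∑ l : Fin k, W l j * sigmoid (cs * (⟪a, x⟫ - b l.castSucc))) :
    μ {p | ∃ j : Fin m, ε < |g p.1 j - f p.2 j|} = 0 := by
  have hdecay : Real.exp (-(cs * δ)) = ε / (√k * M) := by
    have hk' : (0 : ℝ) < √k := Real.sqrt_pos.mpr (Nat.cast_pos.mpr hk)
    rw [hcs, one_div_mul_eq_div, div_mul_cancel₀ _ hδ.ne', Real.exp_neg,
      Real.exp_log (by positivity), inv_div]
  have hinner : Measurable fun p : EuclideanSpace ℝ (Fin d) × Fin c => ⟪a, p.1⟫ :=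
    (continuous_const.inner continuous_fst).measurable
  have hlabelled := ae_exists_and_of_measure_and_eq
    (fun _ => (measurableSet_lt measurable_const hinner).inter
      (measurableSet_lt hinner measurable_const))
    (fun i => measurableSet_eq_fun measurable_snd measurable_const) hcond hcover
  suffices h : ∀ᵐ p ∂μ, ∀ j, |g p.1 j - f p.2 j| ≤ ε by
    simpa only [ae_iff, not_forall, not_le] using h
  filter_upwards [hlabelled] with ⟨x, z⟩ ⟨i, ⟨hlo, hhi⟩, hz⟩ j
  obtain rfl : z = y i := hz
  have htarget : ∑ l ∈ Iic i, W l j = f (y i) j :=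
    (Finset.sum_apply j _ _).symm.trans (congrFun (sum_Iic_eq_of_eq_sub hk hW0 hWs i) j)
  calc |g x j - f (y i) j|
      = |∑ l, W l j * Real.sigmoid (cs * (⟪a, x⟫ - b l.castSucc)) - ∑ l ∈ Iic i, W l j| := by
        rw [hg, htarget, sigmoid_eq_real_sigmoid]
    _ ≤ √k * √(∑ l, W l j ^ 2) * Real.exp (-(cs * δ)) :=
        abs_sum_mul_sigmoid_sub_sum_Iic_le hb hδ.le hlo hhi _
    _ ≤ √k * M * Real.exp (-(cs * δ)) := by
        gcongr; rw [hM]; exact Finset.le_sup' (fun j => √(∑ l, W l j ^ 2)) (mem_univ j)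
    _ = ε := by rw [hdecay]; field_simp

/-- **Theorem 1.** If the distribution `μ` on `ℝ^d × {1,…,c}` is `k`-separable with
`δ`-margin (witnessed by the unit vector `a`, boundaries `b_1 < ⋯ < b_{k+1}` and
labels `y_1,…,y_k`), `f` is an injective encoding of the labels into `ℝ^m`, `W` is
the difference-weight matrix built from `f(y_1),…,f(y_k)`, and the scaling factor is
`c_s = (1/δ) log(√k · max_j ‖w_j‖₂ / ε)`, then the 2-layer sigmoid network `g`
satisfies `P_{(x,y)∼D}(max_j |g_j(x) - f_j(y)| > ε) = 0`. -/
theorem two_layer_network_perfect_fit {d c k m : ℕ} (hk : 0 < k) (hm : 0 < m)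
    (μ : Measure (EuclideanSpace ℝ (Fin d) × Fin c)) [IsProbabilityMeasure μ]
    (δ : ℝ) (hδ : 0 < δ)
    (a : EuclideanSpace ℝ (Fin d)) (ha : ‖a‖ = 1)
    (b : Fin (k + 1) → ℝ) (hb : StrictMono b)
    (y : Fin k → Fin c)
    (hcond : ∀ i : Fin k,
      μ {p | (b i.castSucc + δ < ⟪a, p.1⟫ ∧ ⟪a, p.1⟫ < b i.succ - δ) ∧ p.2 = y i}
        = μ {p | b i.castSucc + δ < ⟪a, p.1⟫ ∧ ⟪a, p.1⟫ < b i.succ - δ})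
    (hcover :
      μ {p | ∃ i : Fin k, b i.castSucc + δ < ⟪a, p.1⟫ ∧ ⟪a, p.1⟫ < b i.succ - δ} = 1)
    (f : Fin c → Fin m → ℝ) (hf : Function.Injective f)
    (ε : ℝ) (hε : 0 < ε)
    (W : Matrix (Fin k) (Fin m) ℝ)
    (hW0 : W ⟨0, hk⟩ = f (y ⟨0, hk⟩))
    (hWs : ∀ i j : Fin k, (j : ℕ) = (i : ℕ) + 1 → W j = f (y j) - f (y i))
    (M : ℝ)
    (hM : M = Finset.univ.sup' (Finset.univ_nonempty_iff.mpr ⟨⟨0, hm⟩⟩)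
      (fun j : Fin m => Real.sqrt (∑ l : Fin k, (W l j) ^ 2)))
    (hMpos : 0 < M)
    (cs : ℝ) (hcs : cs = (1 / δ) * Real.log (Real.sqrt k * M / ε))
    (g : EuclideanSpace ℝ (Fin d) → Fin m → ℝ)
    (hg : ∀ x j, g x j = ∑ l : Fin k, W l j * sigmoid (cs * (⟪a, x⟫ - b l.castSucc))) :
    μ {p | ∃ j : Fin m, ε < |g p.1 j - f p.2 j|} = 0 :=
  two_layer_network_perfect_fit_general hk hm μ δ hδ a b hb y hcond hcover f ε hε W hW0 hWs M hM
    hMpos cs hcs g hg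
end

section
/- (Corollary 2) Let D be a probability distribution on ℝ^d × {1,…,c} that is (k_1,…,k_n)-separable with δ-margin. Then there exist, for each s ∈ {1,…,n}, a scaling factor c^{(s)} > 0, a unit vector a_s ∈ ℝ^d, boundaries b_{s,1}, …, b_{s,k_s} ∈ ℝ, and weights W^{(s)} ∈ ℝ^{k_s}, together with K = ∏_{s=1}^{n} k_s, a scaling factor c′ > 0, boundaries β_1, …, β_K ∈ ℝ, and a weight matrix W′ ∈ ℝ^{K×c}, such that the 4-layer sigmoid network g : ℝ^d → ℝ^c defined by p^s(x) = Σ_{l=1}^{k_s} W^{(s)}_l · ρ(c^{(s)}(a_sᵀx - b_{s,l})) and g_j(x) = Σ_{l=1}^{K} W′_{l,j} · ρ(c′((1/√n)·Σ_{s=1}^{n} p^s(x) - β_l)) perfectly classifies D: for D-almost every (x,y), g_y(x) > g_j(x) for all j ≠ y. -/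
open RealInnerProductSpace MeasureTheory

set_option maxHeartbeats 1600000

lemma sigmoid_pos (t : ℝ) : 0 < sigmoid t := by
  unfold sigmoid; positivity

lemma sigmoid_lt_one (t : ℝ) : sigmoid t < 1 := by
  unfold sigmoid
  rw [div_lt_one (by positivity)]
  linarith [Real.exp_pos (-t)]

lemma sigmoid_le_exp (t : ℝ) : sigmoid t ≤ Real.exp t := by
  unfold sigmoid
  rw [div_le_iff₀ (by positivity)]
  have h2 : Real.exp t * Real.exp (-t) = 1 := by
    rw [← Real.exp_add]; simp
  nlinarith [Real.exp_pos t]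

lemma one_sub_exp_neg_le_sigmoid (t : ℝ) : 1 - Real.exp (-t) ≤ sigmoid t := by
  unfold sigmoid
  rw [le_div_iff₀ (by positivity)]
  nlinarith [Real.exp_pos (-t)]

lemma sigmoid_near_one {A t : ℝ} (h : A ≤ t) : |sigmoid t - 1| ≤ Real.exp (-A) := by
  have h1 := one_sub_exp_neg_le_sigmoid t
  have h2 := sigmoid_lt_one t
  have h3 : Real.exp (-t) ≤ Real.exp (-A) := Real.exp_le_exp.2 (neg_le_neg h)
  rw [abs_le]; constructor <;> nlinarith [Real.exp_pos (-A)]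

lemma sigmoid_near_zero {A t : ℝ} (h : t ≤ -A) : |sigmoid t| ≤ Real.exp (-A) := by
  have h1 := sigmoid_le_exp t
  have h2 := sigmoid_pos t
  rw [abs_of_pos h2]
  calc sigmoid t ≤ Real.exp t := h1
    _ ≤ Real.exp (-A) := Real.exp_le_exp.2 h

/-- A distribution `μ` on `ℝ^d × {1,…,c}` is `(k_1,…,k_n)`-separable with `δ`-margin:
there exist unit projection vectors `a_1,…,a_n` and boundaries
`b_{s,1} < ⋯ < b_{s,k_s+1}` such that each region
`X_𝐢 = {x : ∀ s, b_{s,i_s} + δ < a_sᵀx < b_{s,i_s+1} - δ}` carries a single label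
almost surely, and the union of the regions has full measure. -/
def IsMultiSeparable {d c : ℕ} {n : ℕ} (k : Fin n → ℕ)
    (μ : Measure (EuclideanSpace ℝ (Fin d) × Fin c)) (δ : ℝ) : Prop :=
  0 < δ ∧
  ∃ (a : Fin n → EuclideanSpace ℝ (Fin d)) (b : ∀ s : Fin n, Fin (k s + 1) → ℝ),
    (∀ s, ‖a s‖ = 1) ∧ (∀ s, StrictMono (b s)) ∧
    (∀ I : ∀ s : Fin n, Fin (k s), ∃ yI : Fin c,
      μ {p | (∀ s, b s (I s).castSucc + δ < ⟪a s, p.1⟫ ∧ ⟪a s, p.1⟫ < b s (I s).succ - δ)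
              ∧ p.2 = yI}
        = μ {p | ∀ s, b s (I s).castSucc + δ < ⟪a s, p.1⟫ ∧
              ⟪a s, p.1⟫ < b s (I s).succ - δ}) ∧
    μ {p | ∃ I : ∀ s : Fin n, Fin (k s),
      ∀ s, b s (I s).castSucc + δ < ⟪a s, p.1⟫ ∧ ⟪a s, p.1⟫ < b s (I s).succ - δ} = 1


/-- **Corollary 2.** If the distribution `μ` on `ℝ^d × {1,…,c}` is
`(k_1,…,k_n)`-separable with `δ`-margin, then there is a 4-layer sigmoid network
`g_j(x) = Σ_l W'_{l,j} ρ(c'((1/√n) Σ_s p^s(x) - β_l))` with subnetworks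
`p^s(x) = Σ_l W^{(s)}_l ρ(c^{(s)}(a_sᵀx - b_{s,l}))` that perfectly classifies `μ`:
almost surely over `(x,y) ∼ μ`, the true label `y` is the unique argmax of `g(x)`. -/
theorem four_layer_network_perfect_classification {d c : ℕ} {n : ℕ} (hn : 1 ≤ n)
    (k : Fin n → ℕ) (hk : ∀ s, 0 < k s)
    (μ : Measure (EuclideanSpace ℝ (Fin d) × Fin c)) [IsProbabilityMeasure μ]
    (δ : ℝ) (hsep : IsMultiSeparable k μ δ) :
    ∃ (cS : Fin n → ℝ) (a : Fin n → EuclideanSpace ℝ (Fin d))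
      (b : ∀ s : Fin n, Fin (k s) → ℝ) (W : ∀ s : Fin n, Fin (k s) → ℝ)
      (c' : ℝ) (β : Fin (∏ s : Fin n, k s) → ℝ)
      (W' : Matrix (Fin (∏ s : Fin n, k s)) (Fin c) ℝ),
      (∀ s, 0 < cS s) ∧ (∀ s, ‖a s‖ = 1) ∧ 0 < c' ∧
      μ {p | ¬ ∀ j : Fin c, j ≠ p.2 →
        (∑ l : Fin (∏ s : Fin n, k s), W' l j *
            sigmoid (c' * ((1 / Real.sqrt n) *
              (∑ s : Fin n, ∑ l' : Fin (k s),
                W s l' * sigmoid (cS s * (⟪a s, p.1⟫ - b s l'))) - β l)))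
          < ∑ l : Fin (∏ s : Fin n, k s), W' l p.2 *
            sigmoid (c' * ((1 / Real.sqrt n) *
              (∑ s : Fin n, ∑ l' : Fin (k s),
                W s l' * sigmoid (cS s * (⟪a s, p.1⟫ - b s l'))) - β l))} = 0 := by
  obtain ⟨hδ, a, b, ha, hb, hlab, hfull⟩ := hsep
  choose yI hyI using hlab
  have hKpos : 0 < ∏ s : Fin n, k s := Finset.prod_pos (fun s _ => hk s)
  set K : ℕ := ∏ s : Fin n, k s with hKdef
  have hK1 : (1:ℝ) ≤ (K:ℝ) := by exact_mod_cast hKpos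
  have hn1 : (1:ℝ) ≤ (n:ℝ) := by exact_mod_cast hn
  have hsqrt : 0 < Real.sqrt n := Real.sqrt_pos.2 (by linarith)
  -- layer-1 constants
  set ε1 : ℝ := (4 * (n:ℝ) * (K:ℝ) + 4)⁻¹ with hε1def
  have hden1 : (0:ℝ) < 4 * (n:ℝ) * (K:ℝ) + 4 := by nlinarith
  have hε1pos : 0 < ε1 := inv_pos.2 hden1
  have hε1mul : ε1 * (4 * (n:ℝ) * (K:ℝ) + 4) = 1 := inv_mul_cancel₀ hden1.ne'
  set C : ℝ := δ⁻¹ * Real.log (4 * (n:ℝ) * (K:ℝ) + 4) with hCdef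
  have hCpos : 0 < C := mul_pos (inv_pos.2 hδ) (Real.log_pos (by nlinarith))
  have hCδ : Real.exp (-(C * δ)) = ε1 := by
    have : C * δ = Real.log (4 * (n:ℝ) * (K:ℝ) + 4) := by
      rw [hCdef]; field_simp
    rw [this, Real.exp_neg, Real.exp_log hden1]
  -- layer-2 constants
  set L2 : ℝ := Real.log (8 * (K:ℝ) + 8) with hL2def
  have hL2pos : 0 < L2 := Real.log_pos (by nlinarith)
  set ε2 : ℝ := (8 * (K:ℝ) + 8)⁻¹ with hε2def
  have hden2 : (0:ℝ) < 8 * (K:ℝ) + 8 := by nlinarith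
  have hε2pos : 0 < ε2 := inv_pos.2 hden2
  have hε2mul : ε2 * (8 * (K:ℝ) + 8) = 1 := inv_mul_cancel₀ hden2.ne'
  have hL2exp : Real.exp (-L2) = ε2 := by
    rw [hL2def, Real.exp_neg, Real.exp_log hden2]
  set c' : ℝ := 4 * Real.sqrt n * L2 with hc'def
  have hc'pos : 0 < c' := by positivity
  -- mixed-radix weights
  set M : Fin n → ℕ := fun s => ∏ j : Fin (s : ℕ), k (Fin.castLE s.is_lt.le j) with hMdef
  have hMpos : ∀ s, 0 < M s := fun s => Finset.prod_pos (fun j _ => hk _)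
  have hMK : ∀ s : Fin n, M s * k s ≤ K := by
    intro s
    have hemb : M s = ∏ i ∈ Finset.univ.map ⟨Fin.castLE s.is_lt.le, Fin.castLE_injective _⟩, k i := by
      rw [Finset.prod_map]; rfl
    have hnotmem : s ∉ Finset.univ.map ⟨Fin.castLE s.is_lt.le, Fin.castLE_injective _⟩ := by
      simp only [Finset.mem_map, Finset.mem_univ, true_and, Function.Embedding.coeFn_mk]
      rintro ⟨j, hj⟩
      have := j.isLt
      rw [Fin.ext_iff] at hj
      simp [Fin.coe_castLE] at hj
      omega
    calc M s * k s = ∏ i ∈ insert s (Finset.univ.map ⟨Fin.castLE s.is_lt.le, Fin.castLE_injective _⟩), k i := by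
          rw [Finset.prod_insert hnotmem, ← hemb, mul_comm]
      _ ≤ ∏ i : Fin n, k i :=
          Finset.prod_le_prod_of_subset_of_one_le' (Finset.subset_univ _) (fun i _ _ => hk i)
      _ = K := rfl
  -- labels and second-layer weights
  set lab : ℕ → Fin c := fun m => yI (finPiFinEquiv.symm ⟨m % K, Nat.mod_lt m hKpos⟩) with hlabdef
  set u : Fin c → ℕ → ℝ := fun j m => if m = 0 then 0 else if j = lab (m - 1) then 1 else 0 with hudef
  have hu01 : ∀ j m, u j m = 0 ∨ u j m = 1 := by
    intro j m; rw [hudef]; dsimp only; split_ifs <;> simp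
  set W' : Matrix (Fin K) (Fin c) ℝ := Matrix.of fun m j => u j ((m:ℕ) + 1) - u j (m:ℕ) with hW'def
  set β : Fin K → ℝ := fun m => ((m:ℝ) - 1/2) / Real.sqrt n with hβdef
  refine ⟨fun _ => C, a, fun s l => b s l.succ, fun s l => (M s : ℝ), c', β, W',
    fun _ => hCpos, ha, hc'pos, ?_⟩
  -- the key pointwise classification lemma
  have key : ∀ (x : EuclideanSpace ℝ (Fin d)) (I : ∀ s : Fin n, Fin (k s)),
      (∀ s, b s (I s).castSucc + δ < ⟪a s, x⟫ ∧ ⟪a s, x⟫ < b s (I s).succ - δ) →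
      ∀ j : Fin c, j ≠ yI I →
        (∑ l : Fin K, W' l j * sigmoid (c' * ((1 / Real.sqrt n) *
            (∑ s : Fin n, ∑ l' : Fin (k s),
              (M s : ℝ) * sigmoid (C * (⟪a s, x⟫ - b s l'.succ))) - β l)))
        < ∑ l : Fin K, W' l (yI I) * sigmoid (c' * ((1 / Real.sqrt n) *
            (∑ s : Fin n, ∑ l' : Fin (k s),
              (M s : ℝ) * sigmoid (C * (⟪a s, x⟫ - b s l'.succ))) - β l)) := by
    intro x I hreg j hj
    set S : ℝ := ∑ s : Fin n, ∑ l' : Fin (k s),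
        (M s : ℝ) * sigmoid (C * (⟪a s, x⟫ - b s l'.succ)) with hSdef
    -- Step A : per-direction approximation
    have stepA : ∀ s : Fin n,
        |(∑ l' : Fin (k s), (M s : ℝ) * sigmoid (C * (⟪a s, x⟫ - b s l'.succ)))
          - ((I s : ℕ) : ℝ) * (M s : ℝ)| ≤ (M s : ℝ) * (k s : ℝ) * ε1 := by
      intro s
      obtain ⟨h1, h2⟩ := hreg s
      have hterm : ∀ l' : Fin (k s),
          |sigmoid (C * (⟪a s, x⟫ - b s l'.succ))
            - (if (l' : ℕ) < (I s : ℕ) then (1:ℝ) else 0)| ≤ ε1 := by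
        intro l'
        by_cases hl : (l' : ℕ) < (I s : ℕ)
        · have hble : b s l'.succ ≤ b s (I s).castSucc :=
            (hb s).monotone (by simp only [Fin.le_def, Fin.val_succ, Fin.coe_castSucc]; omega)
          have harg : C * δ ≤ C * (⟪a s, x⟫ - b s l'.succ) := by
            apply mul_le_mul_of_nonneg_left _ hCpos.le; linarith
          simpa [hl, hCδ] using sigmoid_near_one harg
        · have hble : b s (I s).succ ≤ b s l'.succ :=
            (hb s).monotone (by simp only [Fin.le_def, Fin.val_succ]; omega)
          have harg : C * (⟪a s, x⟫ - b s l'.succ) ≤ -(C * δ) := by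
            have : ⟪a s, x⟫ - b s l'.succ ≤ -δ := by linarith
            calc C * (⟪a s, x⟫ - b s l'.succ) ≤ C * (-δ) :=
                mul_le_mul_of_nonneg_left this hCpos.le
              _ = -(C * δ) := by ring
          simpa [hl, hCδ] using sigmoid_near_zero harg
      have hcount : (∑ l' : Fin (k s), (if (l' : ℕ) < (I s : ℕ) then (1:ℝ) else 0))
          = ((I s : ℕ) : ℝ) := by
        refine Eq.trans (Fin.sum_univ_eq_sum_range
          (fun m2 => if m2 < (I s : ℕ) then (1:ℝ) else 0) (k s)) ?_
        rw [← Finset.sum_filter]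
        have hf : (Finset.range (k s)).filter (· < (I s : ℕ)) = Finset.range (I s : ℕ) := by
          ext m
          simp only [Finset.mem_filter, Finset.mem_range]
          have := (I s).isLt
          omega
        rw [hf, Finset.sum_const, Finset.card_range, nsmul_eq_mul, mul_one]
      have heq : (∑ l' : Fin (k s), (M s : ℝ) * sigmoid (C * (⟪a s, x⟫ - b s l'.succ)))
          - ((I s : ℕ) : ℝ) * (M s : ℝ)
          = (M s : ℝ) * ∑ l' : Fin (k s),
              (sigmoid (C * (⟪a s, x⟫ - b s l'.succ))
                - (if (l' : ℕ) < (I s : ℕ) then (1:ℝ) else 0)) := by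
        have h2 : ∑ l' : Fin (k s), (M s : ℝ) * (if (l' : ℕ) < (I s : ℕ) then (1:ℝ) else 0)
            = ((I s : ℕ) : ℝ) * (M s : ℝ) := by
          rw [← Finset.mul_sum, hcount, mul_comm]
        rw [Finset.mul_sum]
        simp_rw [mul_sub]
        rw [Finset.sum_sub_distrib, h2]
      rw [heq, abs_mul, abs_of_nonneg (by positivity : (0:ℝ) ≤ (M s : ℝ)), mul_assoc]
      apply mul_le_mul_of_nonneg_left _ (by positivity)
      calc |∑ l' : Fin (k s), (sigmoid (C * (⟪a s, x⟫ - b s l'.succ))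
              - (if (l' : ℕ) < (I s : ℕ) then (1:ℝ) else 0))|
          ≤ ∑ l' : Fin (k s), |sigmoid (C * (⟪a s, x⟫ - b s l'.succ))
              - (if (l' : ℕ) < (I s : ℕ) then (1:ℝ) else 0)| :=
            Finset.abs_sum_le_sum_abs _ _
        _ ≤ ∑ _l' : Fin (k s), ε1 := Finset.sum_le_sum (fun l' _ => hterm l')
        _ = (k s : ℝ) * ε1 := by
            rw [Finset.sum_const, Finset.card_univ, Fintype.card_fin, nsmul_eq_mul]
    -- Step B : the total code approximation
    set m0 : Fin K := finPiFinEquiv I with hm0def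
    have hcode : ((m0 : ℕ) : ℝ) = ∑ s : Fin n, ((I s : ℕ) : ℝ) * (M s : ℝ) := by
      have h : (m0 : ℕ) = ∑ s : Fin n, (I s : ℕ) * M s := finPiFinEquiv_apply I
      rw [h]
      push_cast
      rfl
    have hSB : |S - ((m0 : ℕ) : ℝ)| ≤ 1/4 := by
      rw [hSdef, hcode, ← Finset.sum_sub_distrib]
      calc |∑ s : Fin n, ((∑ l' : Fin (k s), (M s : ℝ) * sigmoid (C * (⟪a s, x⟫ - b s l'.succ)))
              - ((I s : ℕ) : ℝ) * (M s : ℝ))|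
          ≤ ∑ s : Fin n, |(∑ l' : Fin (k s), (M s : ℝ) * sigmoid (C * (⟪a s, x⟫ - b s l'.succ)))
              - ((I s : ℕ) : ℝ) * (M s : ℝ)| := Finset.abs_sum_le_sum_abs _ _
        _ ≤ ∑ s : Fin n, (K : ℝ) * ε1 := by
            apply Finset.sum_le_sum
            intro s _
            refine (stepA s).trans ?_
            have : (M s : ℝ) * (k s : ℝ) ≤ (K : ℝ) := by
              have := hMK s
              exact_mod_cast this
            exact mul_le_mul_of_nonneg_right this hε1pos.le
        _ = (n : ℝ) * ((K : ℝ) * ε1) := by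
            rw [Finset.sum_const, Finset.card_univ, Fintype.card_fin, nsmul_eq_mul]
        _ ≤ 1/4 := by nlinarith [hε1pos.le]
    -- Step C : second layer sigmoids
    have stepC : ∀ m : Fin K,
        |sigmoid (c' * ((1 / Real.sqrt n) * S - β m))
          - (if (m : ℕ) ≤ (m0 : ℕ) then (1:ℝ) else 0)| ≤ ε2 := by
      intro m
      have hβm : β m = ((m:ℝ) - 1/2) / Real.sqrt n := rfl
      have habs := abs_le.1 hSB
      by_cases hm : (m : ℕ) ≤ (m0 : ℕ)
      · have hmle : ((m:ℕ):ℝ) ≤ ((m0:ℕ):ℝ) := by exact_mod_cast hm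
        have hexp : (1 / Real.sqrt n) * S - ((m:ℝ) - 1/2) / Real.sqrt n
            = (S - (m:ℝ) + 1/2) / Real.sqrt n := by
          field_simp
          ring
        have h1 : (1/4 : ℝ) / Real.sqrt n ≤ (1 / Real.sqrt n) * S - β m := by
          rw [hβm, hexp]
          gcongr
          linarith [habs.1]
        have harg : L2 ≤ c' * ((1 / Real.sqrt n) * S - β m) := by
          have : c' * ((1/4 : ℝ) / Real.sqrt n) = L2 := by
            rw [hc'def]; field_simp <;> ring
          calc L2 = c' * ((1/4 : ℝ) / Real.sqrt n) := this.symm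
            _ ≤ c' * ((1 / Real.sqrt n) * S - β m) :=
                mul_le_mul_of_nonneg_left h1 hc'pos.le
        simpa [hm, hL2exp] using sigmoid_near_one harg
      · have hmgt : ((m0:ℕ):ℝ) + 1 ≤ ((m:ℕ):ℝ) := by
          have : (m0:ℕ) + 1 ≤ (m:ℕ) := by omega
          exact_mod_cast this
        have hexp : (1 / Real.sqrt n) * S - ((m:ℝ) - 1/2) / Real.sqrt n
            = (S - (m:ℝ) + 1/2) / Real.sqrt n := by
          field_simp
          ring
        have h1 : (1 / Real.sqrt n) * S - β m ≤ -((1/4 : ℝ) / Real.sqrt n) := by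
          have hneg : -((1/4 : ℝ) / Real.sqrt n) = (-(1/4) : ℝ) / Real.sqrt n := by ring
          rw [hβm, hexp, hneg]
          gcongr
          linarith [habs.2]
        have harg : c' * ((1 / Real.sqrt n) * S - β m) ≤ -L2 := by
          have hval : c' * (-((1/4 : ℝ) / Real.sqrt n)) = -L2 := by
            rw [hc'def]; field_simp <;> ring
          calc c' * ((1 / Real.sqrt n) * S - β m)
              ≤ c' * (-((1/4 : ℝ) / Real.sqrt n)) :=
                mul_le_mul_of_nonneg_left h1 hc'pos.le
            _ = -L2 := hval
        simpa [hm, hL2exp] using sigmoid_near_zero harg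
    -- Step D : output layer
    have hW'bd : ∀ (m : Fin K) (j' : Fin c), |W' m j'| ≤ 1 := by
      intro m j'
      have h1 := hu01 j' ((m:ℕ) + 1)
      have h2 := hu01 j' (m:ℕ)
      rw [hW'def]
      simp only [Matrix.of_apply]
      rcases h1 with h1 | h1 <;> rcases h2 with h2 | h2 <;> rw [h1, h2] <;> norm_num
    have hlabm0 : lab (m0 : ℕ) = yI I := by
      rw [hlabdef]
      dsimp only
      have hmod : (m0 : ℕ) % K = (m0 : ℕ) := Nat.mod_eq_of_lt m0.isLt
      have : (⟨(m0:ℕ) % K, Nat.mod_lt _ hKpos⟩ : Fin K) = m0 := by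
        apply Fin.ext; simp [hmod]
      rw [this, hm0def, Equiv.symm_apply_apply]
    have hsum : ∀ j' : Fin c,
        |(∑ m : Fin K, W' m j' * sigmoid (c' * ((1 / Real.sqrt n) * S - β m)))
          - (if j' = yI I then (1:ℝ) else 0)| ≤ (K : ℝ) * ε2 := by
      intro j'
      have htel : (∑ m : Fin K, W' m j' * (if (m:ℕ) ≤ (m0:ℕ) then (1:ℝ) else 0))
          = (if j' = yI I then (1:ℝ) else 0) := by
        have h1 : ∀ m : Fin K, W' m j' * (if (m:ℕ) ≤ (m0:ℕ) then (1:ℝ) else 0)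
            = (if (m:ℕ) < (m0:ℕ) + 1 then (u j' ((m:ℕ)+1) - u j' (m:ℕ)) else 0) := by
          intro m
          by_cases h : (m:ℕ) ≤ (m0:ℕ)
          · rw [if_pos h, if_pos (by omega), mul_one, hW'def]; rfl
          · rw [if_neg h, if_neg (by omega), mul_zero]
        rw [Finset.sum_congr rfl (fun m _ => h1 m)]
        refine Eq.trans (Fin.sum_univ_eq_sum_range
          (fun m2 => if m2 < (m0:ℕ) + 1 then (u j' (m2+1) - u j' m2) else 0) K) ?_
        rw [← Finset.sum_filter]
        have hf : (Finset.range K).filter (· < (m0:ℕ) + 1) = Finset.range ((m0:ℕ) + 1) := by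
          ext m
          simp only [Finset.mem_filter, Finset.mem_range]
          have := m0.isLt
          omega
        rw [hf, Finset.sum_range_sub (u j')]
        rw [hudef]
        simp [hlabm0]
      have hptbd : ∀ m : Fin K,
          |W' m j' * sigmoid (c' * ((1 / Real.sqrt n) * S - β m))
            - W' m j' * (if (m:ℕ) ≤ (m0:ℕ) then (1:ℝ) else 0)| ≤ ε2 := by
        intro m
        rw [← mul_sub, abs_mul]
        calc |W' m j'| * |sigmoid (c' * ((1 / Real.sqrt n) * S - β m))
                - (if (m:ℕ) ≤ (m0:ℕ) then (1:ℝ) else 0)|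
            ≤ 1 * ε2 := by
              apply mul_le_mul (hW'bd m j') (stepC m) (abs_nonneg _) zero_le_one
          _ = ε2 := one_mul _
      calc |(∑ m : Fin K, W' m j' * sigmoid (c' * ((1 / Real.sqrt n) * S - β m)))
              - (if j' = yI I then (1:ℝ) else 0)|
          = |∑ m : Fin K, (W' m j' * sigmoid (c' * ((1 / Real.sqrt n) * S - β m))
              - W' m j' * (if (m:ℕ) ≤ (m0:ℕ) then (1:ℝ) else 0))| := by
            rw [Finset.sum_sub_distrib, htel]
        _ ≤ ∑ m : Fin K, |W' m j' * sigmoid (c' * ((1 / Real.sqrt n) * S - β m))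
              - W' m j' * (if (m:ℕ) ≤ (m0:ℕ) then (1:ℝ) else 0)| :=
            Finset.abs_sum_le_sum_abs _ _
        _ ≤ ∑ _m : Fin K, ε2 := Finset.sum_le_sum (fun m _ => hptbd m)
        _ = (K : ℝ) * ε2 := by
            rw [Finset.sum_const, Finset.card_univ, Fintype.card_fin, nsmul_eq_mul]
    have hKε2 : (K : ℝ) * ε2 < 1/2 := by
      nlinarith [hε2pos, hε2mul]
    have hgy := abs_le.1 (hsum (yI I))
    have hgj := abs_le.1 (hsum j)
    rw [if_pos rfl] at hgy
    rw [if_neg hj] at hgj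
    linarith [hgy.1, hgj.2]
  -- measure-theoretic conclusion
  have hinner : ∀ s : Fin n, Measurable fun p : EuclideanSpace ℝ (Fin d) × Fin c => ⟪a s, p.1⟫ :=
    fun s => (continuous_const.inner continuous_fst).measurable
  have hRmeas : ∀ I : ∀ s : Fin n, Fin (k s), MeasurableSet
      {p : EuclideanSpace ℝ (Fin d) × Fin c | ∀ s, b s (I s).castSucc + δ < ⟪a s, p.1⟫ ∧ ⟪a s, p.1⟫ < b s (I s).succ - δ} := by
    intro I
    have heq : {p : EuclideanSpace ℝ (Fin d) × Fin c | ∀ s, b s (I s).castSucc + δ < ⟪a s, p.1⟫ ∧ ⟪a s, p.1⟫ < b s (I s).succ - δ}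
        = ⋂ s : Fin n, ({p : EuclideanSpace ℝ (Fin d) × Fin c | b s (I s).castSucc + δ < ⟪a s, p.1⟫}
            ∩ {p : EuclideanSpace ℝ (Fin d) × Fin c | ⟪a s, p.1⟫ < b s (I s).succ - δ}) := by
      ext p
      simp only [Set.mem_setOf_eq, Set.mem_iInter, Set.mem_inter_iff]
    rw [heq]
    exact MeasurableSet.iInter fun s =>
      ((measurableSet_lt measurable_const (hinner s)).inter
        (measurableSet_lt (hinner s) measurable_const))
  have hUmeas : MeasurableSet {p : EuclideanSpace ℝ (Fin d) × Fin c |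
      ∃ I : ∀ s : Fin n, Fin (k s), ∀ s, b s (I s).castSucc + δ < ⟪a s, p.1⟫ ∧ ⟪a s, p.1⟫ < b s (I s).succ - δ} := by
    rw [Set.setOf_exists]
    exact MeasurableSet.iUnion fun I => hRmeas I
  have hA : μ {p : EuclideanSpace ℝ (Fin d) × Fin c |
      ¬ ∃ I : ∀ s : Fin n, Fin (k s), ∀ s, b s (I s).castSucc + δ < ⟪a s, p.1⟫ ∧ ⟪a s, p.1⟫ < b s (I s).succ - δ} = 0 := by
    have h1 := measure_compl hUmeas (measure_ne_top μ _)
    rw [hfull, measure_univ] at h1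
    simpa [Set.compl_setOf] using h1
  have hB : ∀ I : ∀ s : Fin n, Fin (k s), μ {p : EuclideanSpace ℝ (Fin d) × Fin c |
      (∀ s, b s (I s).castSucc + δ < ⟪a s, p.1⟫ ∧ ⟪a s, p.1⟫ < b s (I s).succ - δ) ∧ p.2 ≠ yI I} = 0 := by
    intro I
    have htmeas : MeasurableSet {p : EuclideanSpace ℝ (Fin d) × Fin c |
        (∀ s, b s (I s).castSucc + δ < ⟪a s, p.1⟫ ∧ ⟪a s, p.1⟫ < b s (I s).succ - δ) ∧ p.2 = yI I} := by
      have heq2 : {p : EuclideanSpace ℝ (Fin d) × Fin c | (∀ s, b s (I s).castSucc + δ < ⟪a s, p.1⟫ ∧ ⟪a s, p.1⟫ < b s (I s).succ - δ) ∧ p.2 = yI I}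
          = {p : EuclideanSpace ℝ (Fin d) × Fin c | ∀ s, b s (I s).castSucc + δ < ⟪a s, p.1⟫ ∧ ⟪a s, p.1⟫ < b s (I s).succ - δ} ∩ (Prod.snd ⁻¹' {yI I}) := by
        ext p
        simp only [Set.mem_setOf_eq, Set.mem_inter_iff, Set.mem_preimage,
          Set.mem_singleton_iff]
      rw [heq2]
      exact (hRmeas I).inter (measurable_snd (MeasurableSet.singleton _))
    have hdiff : {p : EuclideanSpace ℝ (Fin d) × Fin c | (∀ s, b s (I s).castSucc + δ < ⟪a s, p.1⟫ ∧ ⟪a s, p.1⟫ < b s (I s).succ - δ) ∧ p.2 ≠ yI I}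
        = {p : EuclideanSpace ℝ (Fin d) × Fin c | ∀ s, b s (I s).castSucc + δ < ⟪a s, p.1⟫ ∧ ⟪a s, p.1⟫ < b s (I s).succ - δ} \ {p : EuclideanSpace ℝ (Fin d) × Fin c | (∀ s, b s (I s).castSucc + δ < ⟪a s, p.1⟫ ∧ ⟪a s, p.1⟫ < b s (I s).succ - δ) ∧ p.2 = yI I} := by
      ext p
      simp only [Set.mem_setOf_eq, Set.mem_diff]
      tauto
    have hmd := measure_diff (μ := μ)
      (s₁ := {p : EuclideanSpace ℝ (Fin d) × Fin c | ∀ s, b s (I s).castSucc + δ < ⟪a s, p.1⟫ ∧ ⟪a s, p.1⟫ < b s (I s).succ - δ})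
      (s₂ := {p : EuclideanSpace ℝ (Fin d) × Fin c | (∀ s, b s (I s).castSucc + δ < ⟪a s, p.1⟫ ∧ ⟪a s, p.1⟫ < b s (I s).succ - δ) ∧ p.2 = yI I})
      (fun p hp => hp.1) htmeas.nullMeasurableSet (measure_ne_top μ _)
    rw [hdiff, hmd, hyI I, tsub_self]
  apply measure_mono_null ?_
    (measure_union_null hA (measure_iUnion_null fun I => hB I))
  intro p hp
  simp only [Set.mem_setOf_eq] at hp
  simp only [Set.mem_union, Set.mem_iUnion, Set.mem_setOf_eq]
  by_cases hex : ∃ I : ∀ s : Fin n, Fin (k s), ∀ s, b s (I s).castSucc + δ < ⟪a s, p.1⟫ ∧ ⟪a s, p.1⟫ < b s (I s).succ - δ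
  · obtain ⟨I, hI⟩ := hex
    by_cases hy : p.2 = yI I
    · exfalso
      apply hp
      intro j hj
      rw [hy]
      exact key p.1 I hI j (hy ▸ hj)
    · exact Or.inr ⟨I, hI, hy⟩
  · exact Or.inl hex
end
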